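/- Let (A, ·) be an associative superalgebra over a field of characteristic zero and let R : A → A be a Rota-Baxter operator of weight zero on A. Then the products x ▷ y := R(x)y and x ◁ y := xR(y), defined for homogeneous x, y ∈ A, make (A, ▷, ◁) an L-dendriform superalgebra. -/
import Mathlib


/-- The super sign `(−1)^{|x||y|}` for parities `i`, `j`. -/
def sgn (K : Type*) [Field K] (i j : ZMod 2) : K := (-1 : K) ^ (i.val * j.val)

/-- The product `x ▷ y := R(x)y`. -/
def rtOp {K A : Type*} [Field K] [AddCommGroup A] [Module K A]
    (mul : A →ₗ[K] A →ₗ[K] A) (R : A →ₗ[K] A) (x y : A) : A := mul (R x) y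

/-- The product `x ◁ y := x R(y)`. -/
def ltOp {K A : Type*} [Field K] [AddCommGroup A] [Module K A]
    (mul : A →ₗ[K] A →ₗ[K] A) (R : A →ₗ[K] A) (x y : A) : A := mul x (R y)

/-- if `R` is a Rota-Baxter operator of weight zero on an associative
superalgebra `(A,·)`, then `x ▷ y := R(x)y` and `x ◁ y := xR(y)` make `(A,▷,◁)` an
L-dendriform superalgebra. -/
theorem stmt13 {K A : Type*} [Field K] [CharZero K] [AddCommGroup A] [Module K A]
    (𝒜 : ZMod 2 → Submodule K A) (hgr : DirectSum.IsInternal 𝒜)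
    (mul : A →ₗ[K] A →ₗ[K] A)
    (hmul_even : ∀ (i j : ZMod 2), ∀ x ∈ 𝒜 i, ∀ y ∈ 𝒜 j, mul x y ∈ 𝒜 (i + j))
    (hassoc : ∀ (i j k : ZMod 2), ∀ x ∈ 𝒜 i, ∀ y ∈ 𝒜 j, ∀ z ∈ 𝒜 k,
      mul (mul x y) z = mul x (mul y z))
    (R : A →ₗ[K] A) (hR : ∀ (i : ZMod 2), ∀ x ∈ 𝒜 i, R x ∈ 𝒜 i)
    (hRB : ∀ (i j : ZMod 2), ∀ x ∈ 𝒜 i, ∀ y ∈ 𝒜 j,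
      mul (R x) (R y) = R (mul (R x) y + mul x (R y))) :
    -- ▷ and ◁ are even
    (∀ (i j : ZMod 2), ∀ x ∈ 𝒜 i, ∀ y ∈ 𝒜 j, rtOp mul R x y ∈ 𝒜 (i + j)) ∧
    (∀ (i j : ZMod 2), ∀ x ∈ 𝒜 i, ∀ y ∈ 𝒜 j, ltOp mul R x y ∈ 𝒜 (i + j)) ∧
    -- first L-dendriform super-identity
    (∀ (i j k : ZMod 2), ∀ x ∈ 𝒜 i, ∀ y ∈ 𝒜 j, ∀ z ∈ 𝒜 k,
      rtOp mul R x (rtOp mul R y z)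
        = rtOp mul R (rtOp mul R x y) z + rtOp mul R (ltOp mul R x y) z
          + sgn K i j • rtOp mul R y (rtOp mul R x z)
          - sgn K i j • rtOp mul R (ltOp mul R y x) z
          - sgn K i j • rtOp mul R (rtOp mul R y x) z) ∧
    -- second L-dendriform super-identity
    (∀ (i j k : ZMod 2), ∀ x ∈ 𝒜 i, ∀ y ∈ 𝒜 j, ∀ z ∈ 𝒜 k,
      rtOp mul R x (ltOp mul R y z)
        = ltOp mul R (rtOp mul R x y) z
          + sgn K i j • ltOp mul R y (rtOp mul R x z)
          + sgn K i j • ltOp mul R y (ltOp mul R x z)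
          - sgn K i j • ltOp mul R (ltOp mul R y x) z) := by
  refine ⟨?_, ?_, ?_, ?_⟩
  · intro i j x hx y hy
    exact hmul_even i j _ (hR i x hx) y hy
  · intro i j x hx y hy
    exact hmul_even i j x hx _ (hR j y hy)
  · intro i j k x hx y hy z hz
    simp only [rtOp, ltOp]
    have hA : mul (R (mul (R x) y)) z + mul (R (mul x (R y))) z
        = mul (R x) (mul (R y) z) := by
      have := hRB i j x hx y hy
      rw [← hassoc i j k _ (hR i x hx) _ (hR j y hy) z hz, this, map_add,
        map_add, LinearMap.add_apply]
    have hB : mul (R y) (mul (R x) z)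
        = mul (R (mul (R y) x)) z + mul (R (mul y (R x))) z := by
      have := hRB j i y hy x hx
      rw [← hassoc j i k _ (hR j y hy) _ (hR i x hx) z hz, this, map_add,
        map_add, LinearMap.add_apply]
    rw [← hA, hB]
    module
  · intro i j k x hx y hy z hz
    simp only [rtOp, ltOp]
    have hC : mul (mul y (R x)) (R z)
        = mul y (R (mul (R x) z)) + mul y (R (mul x (R z))) := by
      have := hRB i k x hx z hz
      rw [hassoc j i k y hy _ (hR i x hx) _ (hR k z hz), this, map_add, map_add]
    have hD : mul (mul (R x) y) (R z) = mul (R x) (mul y (R z)) :=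
      hassoc i j k _ (hR i x hx) y hy _ (hR k z hz)
    rw [hD, hC]
    module
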